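/- For every n ≥ 0, Σ_{π ∈ P₂^{sym}(2n), all cycles of π have length 1} q₋^{c₋(π)} = C_n·(1+q₋)ⁿ, where C_n = (1/(n+1))·binom(2n,n) is the n-th Catalan number; equivalently, the symmetric pair partitions all of whose cycles have length 1 are in bijection with noncrossing pair partitions of {1,…,2n} equipped with a sign ±1 on each pair, the number of negative cycles being the number of minus signs. -/

import Mathlib

noncomputable section

namespace TypeB

/-! ### Symmetric pair partitions of [±2n] and their cycles -/

/-- Negation of a set of integers. -/
def negSet (B : Set ℤ) : Set ℤ := (fun x : ℤ => -x) '' B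

/-- The set [±m] = {−m,…,−1,1,…,m} ⊆ ℤ. -/
def pmSet (m : ℕ) : Set ℤ := {i | i ≠ 0 ∧ |i| ≤ (m : ℤ)}

/-- π is a set partition of S. -/
def IsPartitionOn (S : Set ℤ) (π : Set (Set ℤ)) : Prop :=
  (∀ B ∈ π, B ⊆ S ∧ B.Nonempty) ∧ (∀ x ∈ S, ∃! B, B ∈ π ∧ x ∈ B)

def IsPairB (B : Set ℤ) : Prop := ∃ a b : ℤ, a ≠ b ∧ B = {a, b}

def IsSingleB (B : Set ℤ) : Prop := ∃ a : ℤ, B = {a}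

/-- P₂^{sym}(2n): partitions of [±2n] into pairs, invariant under negation, with no
pair equal to its own negation. -/
def P2sym (n : ℕ) (π : Set (Set ℤ)) : Prop :=
  IsPartitionOn (pmSet (2 * n)) π ∧ (∀ B ∈ π, IsPairB B) ∧
  (∀ B ∈ π, negSet B ∈ π) ∧ (∀ B ∈ π, negSet B ≠ B)

/-- Noncrossing partitions: no i < j < k < l with i,k in one block and j,l in another. -/
def NonCrossing (π : Set (Set ℤ)) : Prop :=
  ¬ ∃ (i j k l : ℤ) (B C : Set ℤ), B ∈ π ∧ C ∈ π ∧ B ≠ C ∧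
    i < j ∧ j < k ∧ k < l ∧ i ∈ B ∧ k ∈ B ∧ j ∈ C ∧ l ∈ C

/-- Right legs of positive pairs. -/
def posRightLegs (π : Set (Set ℤ)) : Set ℤ :=
  {b | ∃ a : ℤ, a < b ∧ ({a, b} : Set ℤ) ∈ π ∧ -a < b}

/-- Left legs of negative pairs. -/
def negLeftLegs (π : Set (Set ℤ)) : Set ℤ :=
  {a | ∃ b : ℤ, a < b ∧ ({a, b} : Set ℤ) ∈ π ∧ ¬(-a < b)}

/-- Pairs of ρ do not cover singletons of ρ. -/
def NoCoveredSingleton (ρ : Set (Set ℤ)) : Prop :=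
  ¬ ∃ a b c : ℤ, a < c ∧ c < b ∧ ({a, b} : Set ℤ) ∈ ρ ∧ ({c} : Set ℤ) ∈ ρ

/-- The defining properties of the noncrossing partition π̂ of [±m] associated with π:
a partition into pairs and singletons, noncrossing, symmetric, with every block inside
{1,…,m} or {−m,…,−1}, having the same right legs of positive pairs and the same left
legs of negative pairs as π, and whose pairs do not cover singletons. -/
def HatProps (m : ℕ) (π ρ : Set (Set ℤ)) : Prop :=
  IsPartitionOn (pmSet m) ρ ∧
  (∀ B ∈ ρ, IsPairB B ∨ IsSingleB B) ∧
  NonCrossing ρ ∧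
  (∀ B ∈ ρ, negSet B ∈ ρ) ∧
  (∀ B ∈ ρ, (∀ x ∈ B, 0 < x) ∨ (∀ x ∈ B, x < 0)) ∧
  posRightLegs ρ = posRightLegs π ∧
  negLeftLegs ρ = negLeftLegs π ∧
  NoCoveredSingleton ρ

open Classical in
/-- The partition π̂ associated with π (it exists and is unique). -/
def hatOf (m : ℕ) (π : Set (Set ℤ)) : Set (Set ℤ) :=
  if h : ∃ ρ, HatProps m π ρ then h.choose else ∅

/-- Two pairs A,B of π are connected when some block C of ρ = π̂ meets both. -/
def connStep (π ρ : Set (Set ℤ)) (A B : Set ℤ) : Prop :=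
  A ∈ π ∧ B ∈ π ∧ ∃ C ∈ ρ, (A ∩ C).Nonempty ∧ (B ∩ C).Nonempty

/-- The cycle (connected component) of pairs of π through A. -/
def compOf (π ρ : Set (Set ℤ)) (A : Set ℤ) : Set (Set ℤ) :=
  {B | Relation.ReflTransGen (connStep π ρ) A B}

/-- The set of all cycles (connected components of pairs). -/
def CompsOf (π ρ : Set (Set ℤ)) : Set (Set (Set ℤ)) :=
  {K | ∃ A ∈ π, K = compOf π ρ A}

/-- A component is negative when its support is invariant under negation. -/
def NegComp (K : Set (Set ℤ)) : Prop := negSet (⋃₀ K) = ⋃₀ K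

/-- c₋(π): the number of negative cycles of π ∈ P₂^{sym}(2n). -/
def cNeg (n : ℕ) (π : Set (Set ℤ)) : ℕ :=
  {K ∈ CompsOf π (hatOf (2 * n) π) | NegComp K}.ncard

/-- c(π): the number of cycles of π ∈ P₂^{sym}(2n); positive cycles come in mirror
pairs, each mirror pair counted once. -/
def cCount (n : ℕ) (π : Set (Set ℤ)) : ℕ :=
  cNeg n π + {K ∈ CompsOf π (hatOf (2 * n) π) | ¬NegComp K}.ncard / 2



/-- All cycles of π ∈ P₂^{sym}(2n) have length 1: each negative cycle consists of 2
pairs (length m' with 2m' pairs, so m' = 1) and each positive cycle consists of a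
single pair of π (in each member of its mirror pair of components). -/
def AllCyclesLengthOne (n : ℕ) (π : Set (Set ℤ)) : Prop :=
  ∀ K ∈ CompsOf π (hatOf (2 * n) π),
    (NegComp K → K.ncard = 2) ∧ (¬NegComp K → K.ncard = 1)


/-!
Folding `x ↦ |x|` turns `π ∈ P₂^{sym}(2n)` into a pair partition of `[1, 2n]`, and the right
legs `R` of its pairs (the right legs of the positive pairs of `π`) are the down-steps of a
Dyck path of semilength `n`. The conditions defining `π̂` force it to be the parenthesis
matching of this path together with its mirror image. The cycle through the pair
`{partner b, b}` of a closer `b` reaches the pair at the opener matched with `b`, so all cycles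
have length one exactly when folding sends every pair of `π` to a pair of `π̂`. Such a `π` is
determined by `R` and by the set `N ⊆ R` of closers whose pair crosses `0`; its negative
cycles are the mirror pairs with closer in `N`. Summing `q₋ ^ #N` over `N ⊆ R` gives
`(1 + q₋) ^ n`, and Dyck paths of semilength `n` are counted by `C_n`.
-/

open Finset

/-! ### Dyck paths as sets of down-steps -/

/-- Height after step `k` of the lattice path with down-steps at `R` and up-steps elsewhere. -/
def height (R : Finset ℤ) (k : ℤ) : ℤ := k - 2 * #{x ∈ R | x ≤ k}

section Height

variable {R : Finset ℤ} {a k : ℤ}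

lemma height_eq_add (R : Finset ℤ) (hak : a ≤ k) :
    height R k = height R a + (k - a) - 2 * #{x ∈ R | x ∈ Ioc a k} := by
  have hsplit : {x ∈ R | x ≤ k} = {x ∈ R | x ≤ a ∨ x ∈ Ioc a k} :=
    filter_congr fun x _ => by simp only [mem_Ioc]; omega
  rw [filter_or] at hsplit
  have hdisj : Disjoint {x ∈ R | x ≤ a} {x ∈ R | x ∈ Ioc a k} := by
    rw [disjoint_filter]; intro x _ h; simp only [mem_Ioc]; omega
  rw [height, height, hsplit, card_union_of_disjoint hdisj]
  push_cast; ring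

lemma filter_mem_Ioc_sub_one (R : Finset ℤ) (k : ℤ) :
    {x ∈ R | x ∈ Ioc (k - 1) k} = if k ∈ R then {k} else ∅ := by
  rw [← filter_eq']
  exact filter_congr fun x _ => by simp only [mem_Ioc]; omega

lemma height_of_mem (hk : k ∈ R) : height R k = height R (k - 1) - 1 := by
  rw [height_eq_add R (sub_le_self k zero_le_one), filter_mem_Ioc_sub_one, if_pos hk]
  simp; ring

lemma height_of_notMem (hk : k ∉ R) : height R k = height R (k - 1) + 1 := by
  rw [height_eq_add R (sub_le_self k zero_le_one), filter_mem_Ioc_sub_one, if_neg hk]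
  simp

lemma card_filter_le_add_one (R : Finset ℤ) (k : ℤ) :
    #{x ∈ R | x ≤ k + 1} = #{x ∈ R | x ≤ k} + if k + 1 ∈ R then 1 else 0 := by
  by_cases hk : k + 1 ∈ R
  · have := height_of_mem hk
    simp only [height, add_sub_cancel_right] at this
    rw [if_pos hk]; omega
  · have := height_of_notMem hk
    simp only [height, add_sub_cancel_right] at this
    rw [if_neg hk]; omega

lemma height_of_nonpos (hR : ∀ x ∈ R, 1 ≤ x) (hk : k ≤ 0) : height R k = k := by
  have : {x ∈ R | x ≤ k} = ∅ := filter_eq_empty_iff.2 fun x hx => by have := hR x hx; omega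
  simp [height, this]

lemma exists_last_height_le {u v c : ℤ} (huv : u ≤ v) (hu : height R u ≤ c)
    (hv : c < height R v) :
    ∃ j, u ≤ j ∧ j < v ∧ height R j = c ∧ ∀ k, j < k → k ≤ v → c < height R k := by
  obtain ⟨j, ⟨huj, hjv, hjc⟩, hmax⟩ := Int.exists_greatest_of_bdd
    (P := fun j => u ≤ j ∧ j < v ∧ height R j ≤ c) ⟨v, fun j h => h.2.1.le⟩
    ⟨u, le_rfl, huv.lt_of_ne (by rintro rfl; omega), hu⟩
  have habove : ∀ k, j < k → k ≤ v → c < height R k := fun k hjk hkv => by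
    by_contra! h
    rcases hkv.lt_or_eq with hkv | rfl
    · have := hmax k ⟨by omega, hkv, h⟩; omega
    · omega
  refine ⟨j, huj, hjv, ?_, habove⟩
  have := habove (j + 1) (by omega) (by omega)
  by_cases hj : j + 1 ∈ R
  · have := height_of_mem hj; simp only [add_sub_cancel_right] at this; omega
  · have := height_of_notMem hj; simp only [add_sub_cancel_right] at this; omega

lemma exists_first_height_le {u v c : ℤ} (huv : u ≤ v) (hu : c < height R u)
    (hv : height R v ≤ c) :
    ∃ j, u < j ∧ j ≤ v ∧ height R j = c ∧ j ∈ R ∧ ∀ k, u ≤ k → k < j → c < height R k := by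
  obtain ⟨j, ⟨huj, hjv, hjc⟩, hmin⟩ := Int.exists_least_of_bdd
    (P := fun j => u < j ∧ j ≤ v ∧ height R j ≤ c) ⟨u, fun j h => h.1.le⟩
    ⟨v, huv.lt_of_ne (by rintro rfl; omega), le_rfl, hv⟩
  have hbelow : ∀ k, u ≤ k → k < j → c < height R k := fun k huk hkj => by
    by_contra! h
    rcases huk.lt_or_eq with huk | rfl
    · have := hmin k ⟨huk, by omega, h⟩; omega
    · omega
  have hprev := hbelow (j - 1) (by omega) (by omega)
  have hjR : j ∈ R := by
    by_contra hj
    have := height_of_notMem hj; omega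
  have := height_of_mem hjR
  exact ⟨j, huj, hjv, by omega, hjR, hbelow⟩

end Height

/-- The up-step at `a` and the down-step at `b` are matched parentheses: `b` is the first
return of the path to the level it had before `a`. -/
structure Matches (R : Finset ℤ) (a b : ℤ) : Prop where
  one_le : 1 ≤ a
  lt : a < b
  mem : b ∈ R
  height_eq : height R (a - 1) = height R b
  height_gt : ∀ k, a ≤ k → k < b → height R b < height R k

namespace Matches

variable {R : Finset ℤ} {a a' b b' : ℤ}

lemma pos_left (h : Matches R a b) : 0 < a := h.one_le

lemma pos_right (h : Matches R a b) : 0 < b := by have := h.one_le; have := h.lt; omega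

lemma notMem (h : Matches R a b) : a ∉ R := fun ha => by
  have := height_of_mem ha; have := h.height_gt a le_rfl h.lt; have := h.height_eq; omega

lemma left_unique (h : Matches R a b) (h' : Matches R a' b) : a = a' := by
  by_contra hne
  rcases lt_or_gt_of_ne hne with hlt | hlt
  · have := h.height_gt (a' - 1) (by omega) (by have := h'.lt; omega); have := h'.height_eq
    omega
  · have := h'.height_gt (a - 1) (by omega) (by have := h.lt; omega); have := h.height_eq
    omega

lemma right_unique (h : Matches R a b) (h' : Matches R a b') : b = b' := by
  by_contra hne
  rcases lt_or_gt_of_ne hne with hlt | hlt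
  · have := h'.height_gt b h.lt.le hlt; have := h.height_eq; have := h'.height_eq; omega
  · have := h.height_gt b' h'.lt.le hlt; have := h.height_eq; have := h'.height_eq; omega

lemma not_cross (h : Matches R a b) (h' : Matches R a' b') (h1 : a < a') (h2 : a' < b)
    (h3 : b < b') : False := by
  have := h'.height_gt b h2.le h3
  have := h.height_gt (a' - 1) (by omega) (by omega)
  have := h'.height_eq
  omega

lemma eq_of_mem {x : ℤ} (h : Matches R a b)
    (h' : Matches R a' b') (hx : x = a ∨ x = b) (hx' : x = a' ∨ x = b') : a = a' ∧ b = b' := by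
  rcases hx with rfl | rfl <;> rcases hx' with rfl | rfl
  · exact ⟨rfl, h.right_unique h'⟩
  · exact absurd h'.mem h.notMem
  · exact absurd h.mem h'.notMem
  · exact ⟨h.left_unique h', rfl⟩

end Matches

/-- `R` is the set of down-steps of a Dyck path of semilength `n` on the steps `1, …, 2n`. -/
structure Ballot (n : ℕ) (R : Finset ℤ) : Prop where
  subset : R ⊆ Icc 1 (2 * n : ℤ)
  card_eq : #R = n
  height_nonneg : ∀ k, 0 ≤ k → 0 ≤ height R k

namespace Ballot

variable {n : ℕ} {R : Finset ℤ}

lemma mem_Icc (hB : Ballot n R) {x : ℤ} (hx : x ∈ R) : 1 ≤ x ∧ x ≤ 2 * n :=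
  Finset.mem_Icc.1 (hB.subset hx)

lemma height_zero (hB : Ballot n R) : height R 0 = 0 :=
  height_of_nonpos (fun _ hx => (hB.mem_Icc hx).1) le_rfl

lemma height_two_mul (hB : Ballot n R) : height R (2 * n) = 0 := by
  have : {x ∈ R | x ≤ (2 * n : ℤ)} = R := filter_true_of_mem fun x hx => (hB.mem_Icc hx).2
  rw [height, this, hB.card_eq]; ring

lemma exists_matches_of_mem (hB : Ballot n R) {b : ℤ} (hb : b ∈ R) : ∃ a, Matches R a b := by
  have hb1 := (hB.mem_Icc hb).1
  have hdown := height_of_mem hb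
  have h0 : height R 0 ≤ height R b := by rw [hB.height_zero]; exact hB.height_nonneg b (by omega)
  obtain ⟨j, hj0, hjb, hjc, habove⟩ :=
    exists_last_height_le (u := 0) (v := b - 1) (c := height R b) (by omega) h0 (by omega)
  exact ⟨j + 1, by omega, by omega, hb, by simpa using hjc,
    fun k hk1 hk2 => habove k (by omega) (by omega)⟩

lemma exists_matches_of_notMem (hB : Ballot n R) {a : ℤ} (ha1 : 1 ≤ a) (ha2 : a ≤ 2 * n)
    (ha : a ∉ R) : ∃ b, Matches R a b := by
  have hup := height_of_notMem ha
  have hv : height R (2 * n) ≤ height R (a - 1) := by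
    rw [hB.height_two_mul]; exact hB.height_nonneg (a - 1) (by omega)
  obtain ⟨j, haj, hjn, hjc, hjR, hbelow⟩ :=
    exists_first_height_le (u := a) (v := 2 * n) (c := height R (a - 1)) (by omega) (by omega) hv
  exact ⟨j, ha1, haj, hjR, by omega, fun k hk1 hk2 => by have := hbelow k hk1 hk2; omega⟩

end Ballot

section Involution

variable {s : Finset ℤ} {f : ℤ → ℤ}

/-- `f` maps the descents `f x < x` of a prefix injectively into its ascents. -/
lemma two_mul_card_filter_lt_le (hmaps : ∀ x ∈ s, f x ∈ s) (hinv : ∀ x ∈ s, f (f x) = x)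
    (k : ℤ) : 2 * #{x ∈ s | f x < x ∧ x ≤ k} ≤ #{x ∈ s | x ≤ k} := by
  have hinj : #{x ∈ s | f x < x ∧ x ≤ k} ≤ #{x ∈ s | x < f x ∧ x ≤ k} := by
    refine card_le_card_of_injOn f (fun x hx => ?_) (fun x hx y hy hxy => ?_)
    · simp only [coe_filter, Set.mem_ofPred_eq] at hx ⊢
      exact ⟨hmaps x hx.1, by rw [hinv x hx.1]; exact hx.2.1, by omega⟩
    · simp only [coe_filter, Set.mem_ofPred_eq] at hx hy
      rw [← hinv x hx.1, ← hinv y hy.1, hxy]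
  have hunion : {x ∈ s | f x < x ∧ x ≤ k} ∪ {x ∈ s | x < f x ∧ x ≤ k} ⊆ {x ∈ s | x ≤ k} := by
    intro x hx
    simp only [mem_union, mem_filter] at hx ⊢
    rcases hx with h | h <;> exact ⟨h.1, h.2.2⟩
  have hdisj : Disjoint {x ∈ s | f x < x ∧ x ≤ k} {x ∈ s | x < f x ∧ x ≤ k} := by
    rw [disjoint_filter]; intro x _ h; omega
  have := card_le_card hunion
  rw [card_union_of_disjoint hdisj] at this
  omega

lemma two_mul_card_filter_lt (hmaps : ∀ x ∈ s, f x ∈ s) (hinv : ∀ x ∈ s, f (f x) = x)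
    (hne : ∀ x ∈ s, f x ≠ x) : 2 * #{x ∈ s | f x < x} = #s := by
  have hbij : #{x ∈ s | f x < x} = #{x ∈ s | x < f x} := by
    refine card_nbij' f f (fun x hx => ?_) (fun x hx => ?_) (fun x hx => ?_) (fun x hx => ?_) <;>
      simp only [coe_filter, Set.mem_ofPred_eq] at hx ⊢
    · exact ⟨hmaps x hx.1, by rw [hinv x hx.1]; exact hx.2⟩
    · exact ⟨hmaps x hx.1, by rw [hinv x hx.1]; exact hx.2⟩
    · exact hinv x hx.1
    · exact hinv x hx.1
  have hsplit := card_filter_add_card_filter_not (s := s) (fun x => f x < x)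
  have : {x ∈ s | ¬f x < x} = {x ∈ s | x < f x} :=
    filter_congr fun x hx => by have := hne x hx; omega
  rw [this] at hsplit
  omega

end Involution

lemma ballot_of_involution {n : ℕ} {f : ℤ → ℤ}
    (hmaps : ∀ x ∈ Icc 1 (2 * n : ℤ), f x ∈ Icc 1 (2 * n : ℤ))
    (hinv : ∀ x ∈ Icc 1 (2 * n : ℤ), f (f x) = x) (hne : ∀ x ∈ Icc 1 (2 * n : ℤ), f x ≠ x) :
    Ballot n {x ∈ Icc 1 (2 * n : ℤ) | f x < x} := by
  refine ⟨filter_subset _ _, ?_, fun k hk => ?_⟩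
  · have := two_mul_card_filter_lt hmaps hinv hne
    rw [Int.card_Icc] at this
    omega
  · have hle := two_mul_card_filter_lt_le hmaps hinv k
    have hsub : {x ∈ Icc 1 (2 * n : ℤ) | x ≤ k} ⊆ Icc 1 k := by
      intro x; simp only [mem_filter, Finset.mem_Icc]; omega
    have hk' := (card_le_card hsub).trans_eq (Int.card_Icc 1 k)
    rw [height, filter_filter]
    omega

lemma matches_of_involution {R : Finset ℤ} {a b : ℤ} {f : ℤ → ℤ} (ha : 1 ≤ a) (hab : a < b)
    (haR : a ∉ R) (hbR : b ∈ R) (hmaps : ∀ x ∈ Ioo a b, f x ∈ Ioo a b)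
    (hinv : ∀ x ∈ Ioo a b, f (f x) = x) (hne : ∀ x ∈ Ioo a b, f x ≠ x)
    (hR : ∀ x ∈ Ioo a b, x ∈ R ↔ f x < x) : Matches R a b := by
  have hcount : ∀ k, a ≤ k → k < b →
      {x ∈ R | x ∈ Ioc a k} = {x ∈ Ioo a b | f x < x ∧ x ≤ k} := fun k _ hkb => by
    ext x
    simp only [mem_filter, mem_Ioc, mem_Ioo]
    constructor
    · rintro ⟨hx, h1, h2⟩; exact ⟨⟨h1, by omega⟩, (hR x (mem_Ioo.2 ⟨h1, by omega⟩)).1 hx, h2⟩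
    · rintro ⟨hx, h1, h2⟩; exact ⟨(hR x (mem_Ioo.2 hx)).2 h1, hx.1, h2⟩
  have hprefix : ∀ k, a ≤ k → k < b → #{x ∈ Ioo a b | x ≤ k} = k - a := fun k hak hkb => by
    have : {x ∈ Ioo a b | x ≤ k} = Ioc a k := by
      ext x; simp only [mem_filter, mem_Ioo, mem_Ioc]; omega
    rw [this, Int.card_Ioc]; omega
  have hbal : height R (b - 1) = height R a := by
    have hall : {x ∈ Ioo a b | f x < x ∧ x ≤ b - 1} = {x ∈ Ioo a b | f x < x} :=
      filter_congr fun x hx => by simp only [mem_Ioo] at hx; omega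
    have := two_mul_card_filter_lt hmaps hinv hne
    rw [Int.card_Ioo] at this
    rw [height_eq_add R (by omega : a ≤ b - 1), hcount (b - 1) (by omega) (by omega), hall]
    omega
  have hup := height_of_notMem haR
  have hdown := height_of_mem hbR
  refine ⟨ha, hab, hbR, by omega, fun k hak hkb => ?_⟩
  have := two_mul_card_filter_lt_le hmaps hinv k
  rw [height_eq_add R hak, hcount k hak hkb]
  have := hprefix k hak hkb
  omega

/-! ### Symmetric pair partitions and their closers -/

lemma mem_negSet {B : Set ℤ} {x : ℤ} : x ∈ negSet B ↔ -x ∈ B :=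
  ⟨fun ⟨y, hy, hyx⟩ => by rwa [← hyx, neg_neg], fun h => ⟨-x, h, neg_neg x⟩⟩

lemma negSet_pair (a b : ℤ) : negSet {a, b} = {-a, -b} := Set.image_pair _ a b

lemma negSet_singleton (c : ℤ) : negSet {c} = {-c} := Set.image_singleton

lemma mem_pmSet_two_mul {n : ℕ} {x : ℤ} :
    x ∈ pmSet (2 * n) ↔ x ≠ 0 ∧ -(2 * n : ℤ) ≤ x ∧ x ≤ 2 * n := by
  rw [pmSet, Set.mem_ofPred_eq, abs_le]; push_cast; rfl

lemma mem_pmSet_of_mem_Icc {n : ℕ} {x : ℤ} (hx : x ∈ Icc 1 (2 * n : ℤ)) :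
    x ∈ pmSet (2 * n) := by
  rw [Finset.mem_Icc] at hx; rw [mem_pmSet_two_mul]; omega

lemma IsPairB.exists_eq_pair {B : Set ℤ} (h : IsPairB B) {x : ℤ} (hx : x ∈ B) :
    ∃ y, y ≠ x ∧ B = {x, y} := by
  obtain ⟨a, b, hab, rfl⟩ := h
  rcases hx with rfl | rfl
  · exact ⟨b, hab.symm, rfl⟩
  · exact ⟨a, hab, Set.pair_comm _ _⟩

lemma IsPairB.exists_lt {B : Set ℤ} (h : IsPairB B) : ∃ a b, a < b ∧ B = {a, b} := by
  obtain ⟨a, b, hab, rfl⟩ := h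
  rcases lt_or_gt_of_ne hab with h | h
  · exact ⟨a, b, h, rfl⟩
  · exact ⟨b, a, h, Set.pair_comm _ _⟩

namespace IsPartitionOn

variable {S : Set ℤ} {π σ : Set (Set ℤ)}

lemma eq_of_mem (h : IsPartitionOn S π) {B C : Set ℤ} {x : ℤ} (hB : B ∈ π) (hC : C ∈ π)
    (hxB : x ∈ B) (hxC : x ∈ C) : B = C :=
  (h.2 x ((h.1 B hB).1 hxB)).unique ⟨hB, hxB⟩ ⟨hC, hxC⟩

lemma eq_of_subset (hπ : IsPartitionOn S π) (hσ : IsPartitionOn S σ) (hsub : π ⊆ σ) :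
    π = σ := by
  refine hsub.antisymm fun B hB => ?_
  obtain ⟨x, hx⟩ := (hσ.1 B hB).2
  obtain ⟨C, ⟨hC, hxC⟩, -⟩ := hπ.2 x ((hσ.1 B hB).1 hx)
  rwa [← hσ.eq_of_mem (hsub hC) hB hxC hx]

end IsPartitionOn

open Classical in
/-- The element paired with `x` in `π` (junk value `0` if `x` lies in no pair of `π`). -/
def partner (π : Set (Set ℤ)) (x : ℤ) : ℤ :=
  if h : ∃ y, y ≠ x ∧ ({x, y} : Set ℤ) ∈ π then h.choose else 0

lemma partner_eq {S : Set ℤ} {π : Set (Set ℤ)} (hπ : IsPartitionOn S π) {x y : ℤ} (hxy : y ≠ x)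
    (h : ({x, y} : Set ℤ) ∈ π) : partner π x = y := by
  have hex : ∃ y, y ≠ x ∧ ({x, y} : Set ℤ) ∈ π := ⟨y, hxy, h⟩
  obtain ⟨hne, hmem⟩ := hex.choose_spec
  rw [partner, dif_pos hex]
  have hy : y ∈ ({x, hex.choose} : Set ℤ) := by
    rw [hπ.eq_of_mem hmem h (Or.inl rfl) (Or.inl rfl)]; exact Or.inr rfl
  exact (hy.resolve_left hxy).symm

namespace P2sym

variable {n : ℕ} {π : Set (Set ℤ)} {x : ℤ}

lemma partner_spec (hπ : P2sym n π) (hx : x ∈ pmSet (2 * n)) :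
    partner π x ≠ x ∧ ({x, partner π x} : Set ℤ) ∈ π := by
  obtain ⟨B, ⟨hB, hxB⟩, -⟩ := hπ.1.2 x hx
  obtain ⟨y, hyx, rfl⟩ := (hπ.2.1 B hB).exists_eq_pair hxB
  rw [partner_eq hπ.1 hyx hB]
  exact ⟨hyx, hB⟩

lemma eq_pair_partner (hπ : P2sym n π) {B : Set ℤ} (hB : B ∈ π) (hx : x ∈ B) :
    B = {x, partner π x} := by
  obtain ⟨y, hyx, rfl⟩ := (hπ.2.1 B hB).exists_eq_pair hx
  rw [partner_eq hπ.1 hyx hB]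

lemma partner_mem (hπ : P2sym n π) (hx : x ∈ pmSet (2 * n)) : partner π x ∈ pmSet (2 * n) :=
  (hπ.1.1 _ (hπ.partner_spec hx).2).1 (Or.inr rfl)

lemma partner_ne_zero (hπ : P2sym n π) (hx : x ∈ pmSet (2 * n)) : partner π x ≠ 0 :=
  (hπ.partner_mem hx).1

lemma partner_partner (hπ : P2sym n π) (hx : x ∈ pmSet (2 * n)) :
    partner π (partner π x) = x := by
  obtain ⟨hne, hmem⟩ := hπ.partner_spec hx
  exact partner_eq hπ.1 hne.symm (Set.pair_comm x _ ▸ hmem)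

lemma partner_neg (hπ : P2sym n π) (hx : x ∈ pmSet (2 * n)) :
    partner π (-x) = -partner π x := by
  obtain ⟨hne, hmem⟩ := hπ.partner_spec hx
  have := hπ.2.2.1 _ hmem
  rw [negSet_pair] at this
  exact partner_eq hπ.1 (neg_injective.ne hne) this

lemma partner_ne_neg (hπ : P2sym n π) (hx : x ∈ pmSet (2 * n)) : partner π x ≠ -x := by
  intro h
  have hmem := (hπ.partner_spec hx).2
  rw [h] at hmem
  exact hπ.2.2.2 _ hmem (by rw [negSet_pair, neg_neg, Set.pair_comm])

lemma pair_partner_mem (hπ : P2sym n π) (hx : x ∈ pmSet (2 * n)) :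
    ({partner π x, x} : Set ℤ) ∈ π :=
  Set.pair_comm x _ ▸ (hπ.partner_spec hx).2

lemma neg_pair_mem (hπ : P2sym n π) (hx : x ∈ pmSet (2 * n)) :
    ({-partner π x, -x} : Set ℤ) ∈ π := by
  have := hπ.2.2.1 _ (hπ.partner_spec hx).2
  rwa [negSet_pair, Set.pair_comm] at this

lemma abs_partner_abs_partner (hπ : P2sym n π) (hx : x ∈ pmSet (2 * n)) :
    |partner π (|partner π x|)| = |x| := by
  rcases abs_choice (partner π x) with h | h <;> rw [h]
  · rw [hπ.partner_partner hx]
  · rw [hπ.partner_neg (hπ.partner_mem hx), hπ.partner_partner hx, abs_neg]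

lemma abs_partner_ne_abs (hπ : P2sym n π) (hx : x ∈ pmSet (2 * n)) :
    |partner π x| ≠ |x| := fun h =>
  (abs_eq_abs.1 h).elim (hπ.partner_spec hx).1 (hπ.partner_ne_neg hx)

lemma abs_partner_mem_Icc (hπ : P2sym n π) (hx : x ∈ pmSet (2 * n)) :
    |partner π x| ∈ Icc 1 (2 * n : ℤ) := by
  have := hπ.partner_mem hx
  rw [mem_pmSet_two_mul] at this
  rw [Finset.mem_Icc]
  constructor
  · exact Int.one_le_abs this.1
  · exact abs_le.2 ⟨this.2.1, this.2.2⟩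

end P2sym

/-- The right legs of the positive pairs of `π` (`P2sym.posRightLegs_eq`), which are also
the right legs of the pair partition of `[1, 2n]` obtained by folding `π` along `x ↦ |x|`. -/
def closers (n : ℕ) (π : Set (Set ℤ)) : Finset ℤ :=
  {x ∈ Icc 1 (2 * n : ℤ) | |partner π x| < x}

namespace P2sym

variable {n : ℕ} {π : Set (Set ℤ)} {B : Set ℤ} {b x : ℤ}

lemma ballot_closers (hπ : P2sym n π) : Ballot n (closers n π) := by
  refine ballot_of_involution (fun x hx => hπ.abs_partner_mem_Icc (mem_pmSet_of_mem_Icc hx))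
    (fun x hx => ?_) (fun x hx => ?_) <;>
    have hx0 : |x| = x := abs_of_pos (Finset.mem_Icc.1 hx).1
  · rw [hπ.abs_partner_abs_partner (mem_pmSet_of_mem_Icc hx), hx0]
  · simpa only [hx0] using hπ.abs_partner_ne_abs (mem_pmSet_of_mem_Icc hx)

lemma posRightLegs_eq (hπ : P2sym n π) : posRightLegs π = closers n π := by
  ext b
  simp only [closers, coe_filter, Finset.mem_Icc, Set.mem_ofPred_eq, abs_lt]
  constructor
  · rintro ⟨a, hab, hmem, hnab⟩
    have hb := mem_pmSet_two_mul.1 ((hπ.1.1 _ hmem).1 (Or.inr rfl))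
    rw [partner_eq hπ.1 (by omega) (Set.pair_comm a b ▸ hmem)]
    omega
  · rintro ⟨hb, hlt⟩
    have hmem := (hπ.partner_spec (mem_pmSet_of_mem_Icc (Finset.mem_Icc.2 hb))).2
    exact ⟨partner π b, by omega, Set.pair_comm b _ ▸ hmem, by omega⟩

lemma negLeftLegs_eq (hπ : P2sym n π) : negLeftLegs π = {a | -a ∈ closers n π} := by
  ext a
  simp only [closers, mem_filter, Finset.mem_Icc, Set.mem_ofPred_eq, abs_lt]
  constructor
  · rintro ⟨b, hab, hmem, hnab⟩
    have ha := (hπ.1.1 _ hmem).1 (Or.inl rfl)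
    have hb := mem_pmSet_two_mul.1 ((hπ.1.1 _ hmem).1 (Or.inr rfl))
    have hne := hπ.partner_ne_neg ha
    rw [partner_eq hπ.1 (by omega) hmem] at hne
    rw [hπ.partner_neg ha, partner_eq hπ.1 (by omega) hmem]
    have := mem_pmSet_two_mul.1 ha
    omega
  · rintro ⟨ha, hlt⟩
    have ha' : a ∈ pmSet (2 * n) := by rw [mem_pmSet_two_mul]; omega
    rw [hπ.partner_neg ha'] at hlt
    exact ⟨partner π a, by omega, (hπ.partner_spec ha').2, by omega⟩


lemma abs_mem_closers (hπ : P2sym n π) (hx : x ∈ pmSet (2 * n)) (hlt : |partner π x| < |x|) :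
    |x| ∈ closers n π := by
  have hx' := mem_pmSet_two_mul.1 hx
  rw [closers, mem_filter, Finset.mem_Icc]
  refine ⟨⟨Int.one_le_abs hx'.1, abs_le.2 ⟨hx'.2.1, hx'.2.2⟩⟩, ?_⟩
  rcases abs_choice x with h | h <;> rw [h]
  · rwa [h] at hlt
  · rwa [hπ.partner_neg hx, abs_neg, ← h]

lemma closers_pos (hb : b ∈ closers n π) : 0 < b := by
  rw [closers, mem_filter, Finset.mem_Icc] at hb; omega

lemma mem_pmSet_of_mem_closers (hb : b ∈ closers n π) : b ∈ pmSet (2 * n) :=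
  mem_pmSet_of_mem_Icc (mem_filter.1 hb).1

lemma exists_closer_of_abs_lt (hπ : P2sym n π) (hx : x ∈ pmSet (2 * n))
    (hlt : |partner π x| < |x|) : ∃ b ∈ closers n π,
      ({x, partner π x} : Set ℤ) = {partner π b, b} ∨
        ({x, partner π x} : Set ℤ) = {-partner π b, -b} := by
  refine ⟨|x|, hπ.abs_mem_closers hx hlt, ?_⟩
  rcases abs_choice x with h | h <;> rw [h]
  · exact Or.inl (Set.pair_comm _ _)
  · rw [hπ.partner_neg hx, neg_neg, neg_neg]
    exact Or.inr (Set.pair_comm _ _)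

lemma exists_closer_of_mem (hπ : P2sym n π) (hB : B ∈ π) : ∃ b ∈ closers n π,
    B = {partner π b, b} ∨ B = {-partner π b, -b} := by
  obtain ⟨x, hx⟩ := (hπ.1.1 B hB).2
  have hxpm := (hπ.1.1 B hB).1 hx
  rw [hπ.eq_pair_partner hB hx]
  rcases lt_or_gt_of_ne (hπ.abs_partner_ne_abs hxpm) with hlt | hgt
  · exact hπ.exists_closer_of_abs_lt hxpm hlt
  · have := hπ.exists_closer_of_abs_lt (hπ.partner_mem hxpm)
      (by rwa [hπ.partner_partner hxpm])
    rwa [hπ.partner_partner hxpm, Set.pair_comm] at this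

end P2sym

/-! ### The noncrossing partition `π̂` -/

/-- `π̂` for every `π` whose closers are `R` (`P2sym.hatOf_eq`). -/
def hatSet (R : Finset ℤ) : Set (Set ℤ) :=
  {B | ∃ a b, Matches R a b ∧ (B = {a, b} ∨ B = {-b, -a})}

namespace hatSet

variable {R : Finset ℤ} {B : Set ℤ} {x : ℤ}

lemma pair_mem {a b : ℤ} (h : Matches R a b) : ({a, b} : Set ℤ) ∈ hatSet R :=
  ⟨a, b, h, Or.inl rfl⟩

lemma neg_pair_mem {a b : ℤ} (h : Matches R a b) : ({-b, -a} : Set ℤ) ∈ hatSet R :=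
  ⟨a, b, h, Or.inr rfl⟩

lemma exists_matches (hB : B ∈ hatSet R) (hx : x ∈ B) : ∃ a b, Matches R a b ∧
    (0 < x ∧ B = {a, b} ∧ (x = a ∨ x = b) ∨ x < 0 ∧ B = {-b, -a} ∧ (-x = a ∨ -x = b)) := by
  obtain ⟨a, b, h, rfl | rfl⟩ := hB <;> have := h.pos_left <;> have := h.pos_right <;>
    refine ⟨a, b, h, ?_⟩ <;> rcases hx with rfl | rfl
  · exact Or.inl ⟨by omega, rfl, Or.inl rfl⟩
  · exact Or.inl ⟨by omega, rfl, Or.inr rfl⟩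
  · exact Or.inr ⟨by omega, rfl, Or.inr (neg_neg b)⟩
  · exact Or.inr ⟨by omega, rfl, Or.inl (neg_neg a)⟩

lemma eq_of_mem {C : Set ℤ} (hB : B ∈ hatSet R) (hC : C ∈ hatSet R) (hxB : x ∈ B)
    (hxC : x ∈ C) : B = C := by
  obtain ⟨a, b, h, ⟨hx, rfl, hab⟩ | ⟨hx, rfl, hab⟩⟩ := exists_matches hB hxB <;>
    obtain ⟨a', b', h', ⟨hx', rfl, hab'⟩ | ⟨hx', rfl, hab'⟩⟩ := exists_matches hC hxC
  · obtain ⟨rfl, rfl⟩ := h.eq_of_mem h' hab hab'; rfl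
  · omega
  · omega
  · obtain ⟨rfl, rfl⟩ := h.eq_of_mem h' hab hab'; rfl

lemma isPairB (hB : B ∈ hatSet R) : IsPairB B := by
  obtain ⟨a, b, h, rfl | rfl⟩ := hB <;> have := h.lt
  · exact ⟨a, b, by omega, rfl⟩
  · exact ⟨-b, -a, by omega, rfl⟩

lemma negSet_mem (hB : B ∈ hatSet R) : negSet B ∈ hatSet R := by
  obtain ⟨a, b, h, rfl | rfl⟩ := hB <;> rw [negSet_pair]
  · rw [Set.pair_comm]; exact neg_pair_mem h
  · simp only [neg_neg]; rw [Set.pair_comm]; exact pair_mem h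

lemma pos_or_neg (hB : B ∈ hatSet R) : (∀ x ∈ B, 0 < x) ∨ (∀ x ∈ B, x < 0) := by
  obtain ⟨a, b, h, rfl | rfl⟩ := hB <;> have := h.pos_left <;> have := h.pos_right
  · left; rintro x (rfl | rfl) <;> omega
  · right; rintro x (rfl | rfl) <;> omega

lemma isPartitionOn {n : ℕ} (hR : Ballot n R) : IsPartitionOn (pmSet (2 * n)) (hatSet R) := by
  refine ⟨fun B hB => ⟨fun x hx => ?_, ?_⟩, fun x hx => ?_⟩
  · obtain ⟨a, b, h, hcases⟩ := exists_matches hB hx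
    have := h.lt; have := h.one_le; have := (hR.mem_Icc h.mem).2
    rw [mem_pmSet_two_mul]
    rcases hcases with ⟨_, -, rfl | rfl⟩ | ⟨_, -, h | h⟩ <;> omega
  · obtain ⟨a, b, -, rfl | rfl⟩ := hB
    exacts [⟨a, Or.inl rfl⟩, ⟨-b, Or.inl rfl⟩]
  · suffices ∃ B ∈ hatSet R, x ∈ B by
      obtain ⟨B, hB, hxB⟩ := this
      exact ⟨B, ⟨hB, hxB⟩, fun C hC => eq_of_mem hC.1 hB hC.2 hxB⟩
    rw [mem_pmSet_two_mul] at hx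
    rcases lt_or_gt_of_ne hx.1 with hneg | hpos
    · by_cases hmem : -x ∈ R
      · obtain ⟨a, h⟩ := hR.exists_matches_of_mem hmem
        exact ⟨_, neg_pair_mem h, Or.inl (neg_neg x).symm⟩
      · obtain ⟨b, h⟩ := hR.exists_matches_of_notMem (by omega) (by omega) hmem
        exact ⟨_, neg_pair_mem h, Or.inr (neg_neg x).symm⟩
    · by_cases hmem : x ∈ R
      · obtain ⟨a, h⟩ := hR.exists_matches_of_mem hmem
        exact ⟨_, pair_mem h, Or.inr rfl⟩
      · obtain ⟨b, h⟩ := hR.exists_matches_of_notMem (by omega) (by omega) hmem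
        exact ⟨_, pair_mem h, Or.inl rfl⟩

lemma matches_or_matches_neg (hB : B ∈ hatSet R) {i k : ℤ} (hik : i < k) (hi : i ∈ B)
    (hk : k ∈ B) : Matches R i k ∨ Matches R (-k) (-i) := by
  obtain ⟨a, b, h, rfl | rfl⟩ := hB <;> have := h.lt <;> rcases hi with rfl | rfl <;>
    rcases hk with rfl | rfl <;> first | omega | exact Or.inl h | exact Or.inr (by simpa using h)

lemma nonCrossing : NonCrossing (hatSet R) := by
  rintro ⟨i, j, k, l, B, C, hB, hC, -, hij, hjk, hkl, hiB, hkB, hjC, hlC⟩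
  rcases matches_or_matches_neg hB (by omega) hiB hkB with h | h <;>
    rcases matches_or_matches_neg hC (by omega) hjC hlC with h' | h' <;>
    have := h.pos_left <;> have := h.pos_right <;> have := h'.pos_left <;> have := h'.pos_right
  · exact h.not_cross h' hij hjk hkl
  · omega
  · omega
  · exact h'.not_cross h (by omega) (by omega) (by omega)

lemma posRightLegs_eq {n : ℕ} (hR : Ballot n R) : posRightLegs (hatSet R) = R := by
  ext b
  refine ⟨fun ⟨a, hab, hmem, hnab⟩ => ?_, fun hb => ?_⟩
  · obtain ⟨a', b', h, ⟨-, hBeq, -⟩ | ⟨hb, -, -⟩⟩ :=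
      exists_matches hmem (Or.inr rfl : b ∈ ({a, b} : Set ℤ))
    · have := h.lt
      obtain ⟨rfl, rfl⟩ | ⟨rfl, rfl⟩ := Set.pair_eq_pair_iff.1 hBeq
      · exact h.mem
      · omega
    · omega
  · obtain ⟨a, h⟩ := hR.exists_matches_of_mem hb
    have := h.pos_left; have := h.lt
    exact ⟨a, h.lt, pair_mem h, by omega⟩

lemma negLeftLegs_eq {n : ℕ} (hR : Ballot n R) : negLeftLegs (hatSet R) = {a | -a ∈ R} := by
  ext x
  refine ⟨fun ⟨b, hxb, hmem, hnxb⟩ => ?_, fun hx => ?_⟩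
  · obtain ⟨a', b', h, ⟨hx, -, -⟩ | ⟨-, hBeq, -⟩⟩ :=
      exists_matches hmem (Or.inl rfl : x ∈ ({x, b} : Set ℤ))
    · omega
    · have := h.lt
      obtain ⟨rfl, rfl⟩ | ⟨h1, h2⟩ := Set.pair_eq_pair_iff.1 hBeq
      · simpa using h.mem
      · omega
  · obtain ⟨a, h⟩ := hR.exists_matches_of_mem hx
    have := h.pos_left; have := h.lt
    refine ⟨-a, by omega, ?_, by omega⟩
    simpa using neg_pair_mem h

lemma noCoveredSingleton : NoCoveredSingleton (hatSet R) := by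
  rintro ⟨-, -, c, -, -, -, hc⟩
  obtain ⟨a, b, h, hcases⟩ := exists_matches hc rfl
  have := h.lt
  rcases hcases with ⟨-, hB, -⟩ | ⟨-, hB, -⟩ <;> rw [← Set.pair_eq_singleton c] at hB <;>
    obtain ⟨h1, h2⟩ | ⟨h1, h2⟩ := Set.pair_eq_pair_iff.1 hB <;> omega

end hatSet

lemma P2sym.hatProps_hatSet {n : ℕ} {π : Set (Set ℤ)} (hπ : P2sym n π) :
    HatProps (2 * n) π (hatSet (closers n π)) := by
  have hR := hπ.ballot_closers
  refine ⟨hatSet.isPartitionOn hR, fun B hB => Or.inl (hatSet.isPairB hB), hatSet.nonCrossing,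
    fun B hB => hatSet.negSet_mem hB, fun B hB => hatSet.pos_or_neg hB, ?_, ?_,
    hatSet.noCoveredSingleton⟩
  · rw [hatSet.posRightLegs_eq hR, hπ.posRightLegs_eq]
  · rw [hatSet.negLeftLegs_eq hR, hπ.negLeftLegs_eq]

namespace HatProps

variable {n : ℕ} {π ρ : Set (Set ℤ)} {R : Finset ℤ} {a b : ℤ}

lemma exists_pair_mem_Ioo (hρ : HatProps (2 * n) π ρ) (ha : 0 < a)
    (hmem : ({a, b} : Set ℤ) ∈ ρ) {x : ℤ} (hx : x ∈ Ioo a b) :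
    ∃ y ∈ Ioo a b, y ≠ x ∧ ({x, y} : Set ℤ) ∈ ρ := by
  obtain ⟨hpart, hblocks, hnc, -, -, -, -, hcov⟩ := hρ
  rw [mem_Ioo] at hx
  have hb := mem_pmSet_two_mul.1 ((hpart.1 _ hmem).1 (Or.inr rfl))
  obtain ⟨B, ⟨hB, hxB⟩, -⟩ := hpart.2 x (mem_pmSet_two_mul.2 ⟨by omega, by omega, by omega⟩)
  rcases hblocks B hB with hpair | ⟨c, rfl⟩
  · obtain ⟨y, hyx, rfl⟩ := hpair.exists_eq_pair hxB
    have hne : ({x, y} : Set ℤ) ≠ {a, b} := fun h => by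
      rcases (h ▸ hxB : x ∈ ({a, b} : Set ℤ)) with rfl | rfl <;> omega
    have hya : y ≠ a := by rintro rfl; exact hne (hpart.eq_of_mem hB hmem (Or.inr rfl) (Or.inl rfl))
    have hyb : y ≠ b := by rintro rfl; exact hne (hpart.eq_of_mem hB hmem (Or.inr rfl) (Or.inr rfl))
    refine ⟨y, mem_Ioo.2 ⟨?_, ?_⟩, hyx, hB⟩ <;> by_contra! hy
    · exact hnc ⟨y, a, x, b, _, _, hB, hmem, hne, by omega, hx.1, hx.2, Or.inr rfl,
        Or.inl rfl, Or.inl rfl, Or.inr rfl⟩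
    · exact hnc ⟨a, x, b, y, _, _, hmem, hB, hne.symm, hx.1, hx.2, by omega, Or.inl rfl,
        Or.inr rfl, Or.inl rfl, Or.inr rfl⟩
  · obtain rfl : x = c := hxB
    exact (hcov ⟨a, b, x, hx.1, hx.2, hmem, hB⟩).elim

/-- A positive pair of `ρ` encloses a union of pairs of `ρ`, so its legs are matched
parentheses of the Dyck path of right legs. -/
lemma matches_of_pair_mem (hρ : HatProps (2 * n) π ρ) (hR : posRightLegs ρ = R) (ha : 0 < a)
    (hab : a < b) (hmem : ({a, b} : Set ℤ) ∈ ρ) : Matches R a b := by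
  have hpart := hρ.1
  have hpartner : ∀ x ∈ Ioo a b, partner ρ x ∈ Ioo a b ∧ partner ρ x ≠ x ∧
      ({x, partner ρ x} : Set ℤ) ∈ ρ := fun x hx => by
    obtain ⟨y, hy, hyx, hxy⟩ := hρ.exists_pair_mem_Ioo ha hmem hx
    rw [partner_eq hpart hyx hxy]
    exact ⟨hy, hyx, hxy⟩
  refine matches_of_involution ha hab (fun haR => ?_) ?_ (fun x hx => (hpartner x hx).1)
    (fun x hx => ?_) (fun x hx => (hpartner x hx).2.1) (fun x hx => ?_)
  · obtain ⟨w, hwa, hw, -⟩ := (hR ▸ haR : a ∈ posRightLegs ρ)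
    have hw' : w ∈ ({a, b} : Set ℤ) := by
      rw [← hpart.eq_of_mem hw hmem (Or.inr rfl) (Or.inl rfl)]; exact Or.inl rfl
    rcases hw' with rfl | rfl <;> omega
  · exact (hR ▸ ⟨a, hab, hmem, by omega⟩ : b ∈ (R : Set ℤ))
  · obtain ⟨-, hne, hmem'⟩ := hpartner x hx
    exact partner_eq hpart hne.symm (Set.pair_comm x _ ▸ hmem')
  · obtain ⟨hy, hne, hmem'⟩ := hpartner x hx
    rw [mem_Ioo] at hx hy
    rw [← mem_coe, ← hR]
    constructor
    · rintro ⟨w, hwx, hw, -⟩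
      rwa [partner_eq hpart (by omega) (Set.pair_comm w x ▸ hw)]
    · exact fun hlt => ⟨_, hlt, Set.pair_comm x _ ▸ hmem', by omega⟩

lemma singleton_notMem (hρ : HatProps (2 * n) π ρ) (hR : posRightLegs ρ = R) (hB : Ballot n R)
    (c : ℤ) : ({c} : Set ℤ) ∉ ρ := by
  have hpart := hρ.1
  have hpair : ∀ {c x : ℤ}, x ≠ c → ({x, c} : Set ℤ) ∈ ρ → ({c} : Set ℤ) ∉ ρ := by
    intro c x hxc hx hc
    have : x ∈ ({c} : Set ℤ) := by rw [← hpart.eq_of_mem hx hc (Or.inr rfl) rfl]; exact Or.inl rfl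
    exact hxc this
  suffices ∀ c, 0 < c → ({c} : Set ℤ) ∉ ρ by
    intro hc
    rcases lt_trichotomy c 0 with hc0 | rfl | hc0
    · exact this (-c) (by omega) (negSet_singleton c ▸ hρ.2.2.2.1 _ hc)
    · exact ((hpart.1 _ hc).1 rfl).1 rfl
    · exact this c hc0 hc
  intro c hc0 hc
  by_cases hcR : c ∈ R
  · obtain ⟨w, hwc, hw, -⟩ := (hR ▸ hcR : c ∈ posRightLegs ρ)
    exact hpair hwc.ne hw hc
  · have hc2 := (mem_pmSet_two_mul.1 ((hpart.1 _ hc).1 rfl)).2.2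
    obtain ⟨b, h⟩ := hB.exists_matches_of_notMem hc0 hc2 hcR
    obtain ⟨a, hab, ha, -⟩ := (hR ▸ h.mem : b ∈ posRightLegs ρ)
    have ha0 : 0 < a := (hρ.2.2.2.2.1 _ ha).resolve_right
      (fun hneg => absurd (hneg b (Or.inr rfl)) (not_lt.2 h.pos_right.le)) a (Or.inl rfl)
    obtain rfl := (hρ.matches_of_pair_mem hR ha0 hab ha).left_unique h
    exact hpair h.lt.ne' (by rwa [Set.pair_comm] at ha) hc

lemma subset_hatSet (hρ : HatProps (2 * n) π ρ) (hR : posRightLegs ρ = R) (hB : Ballot n R) :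
    ρ ⊆ hatSet R := by
  intro B hBρ
  rcases hρ.2.1 B hBρ with hpair | ⟨c, rfl⟩
  · obtain ⟨u, v, huv, rfl⟩ := hpair.exists_lt
    rcases hρ.2.2.2.2.1 _ hBρ with hpos | hneg
    · exact hatSet.pair_mem (hρ.matches_of_pair_mem hR (hpos u (Or.inl rfl)) huv hBρ)
    · have hmirror := hρ.2.2.2.1 _ hBρ
      rw [negSet_pair, Set.pair_comm] at hmirror
      have hv := hneg v (Or.inr rfl)
      simpa using hatSet.neg_pair_mem (hρ.matches_of_pair_mem hR (by omega) (by omega) hmirror)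
  · exact absurd hBρ (hρ.singleton_notMem hR hB c)

lemma eq_hatSet (hρ : HatProps (2 * n) π ρ) (hR : posRightLegs ρ = R) (hB : Ballot n R) :
    ρ = hatSet R :=
  hρ.1.eq_of_subset (hatSet.isPartitionOn hB) (hρ.subset_hatSet hR hB)

end HatProps

lemma P2sym.hatOf_eq {n : ℕ} {π : Set (Set ℤ)} (hπ : P2sym n π) :
    hatOf (2 * n) π = hatSet (closers n π) := by
  have hex : ∃ ρ, HatProps (2 * n) π ρ := ⟨_, hπ.hatProps_hatSet⟩
  rw [hatOf, dif_pos hex]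
  exact hex.choose_spec.eq_hatSet (hex.choose_spec.2.2.2.2.2.1.trans hπ.posRightLegs_eq)
    hπ.ballot_closers

/-! ### Cycles -/

section Components

variable {π ρ : Set (Set ℤ)} {A : Set ℤ}

lemma connStep_symm {A B : Set ℤ} (h : connStep π ρ A B) : connStep π ρ B A :=
  let ⟨hA, hB, C, hC, hAC, hBC⟩ := h
  ⟨hB, hA, C, hC, hBC, hAC⟩

lemma compOf_subset_of_closed {K : Set (Set ℤ)} (hA : A ∈ K)
    (hK : ∀ X ∈ K, ∀ Y, connStep π ρ X Y → Y ∈ K) : compOf π ρ A ⊆ K := fun _ hB => by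
  induction hB with
  | refl => exact hA
  | tail _ hXY ih => exact hK _ ih _ hXY

lemma compOf_subset (hA : A ∈ π) : compOf π ρ A ⊆ π :=
  compOf_subset_of_closed hA fun _ _ _ h => h.2.1

/-- A family of blocks of `π` whose union is a union of blocks of `ρ` is closed under
`connStep`. -/
lemma compOf_subset_of_sUnion_eq {S S' : Set ℤ} (hπ : IsPartitionOn S π)
    (hρ : IsPartitionOn S' ρ) {K L : Set (Set ℤ)} (hK : K ⊆ π) (hL : L ⊆ ρ)
    (hKL : ⋃₀ K = ⋃₀ L) (hA : A ∈ K) : compOf π ρ A ⊆ K := by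
  refine compOf_subset_of_closed hA fun X hX Y ⟨_, hY, C, hC, ⟨x, hxX, hxC⟩, ⟨y, hyY, hyC⟩⟩ => ?_
  obtain ⟨D, hD, hxD⟩ : x ∈ ⋃₀ L := hKL ▸ ⟨X, hX, hxX⟩
  obtain rfl := hρ.eq_of_mem hC (hL hD) hxC hxD
  obtain ⟨Z, hZ, hyZ⟩ : y ∈ ⋃₀ K := hKL ▸ ⟨C, hD, hyC⟩
  rwa [hπ.eq_of_mem hY (hK hZ) hyY hyZ]

lemma negComp_pair_neg (x y : ℤ) :
    NegComp {({x, y} : Set ℤ), ({-x, -y} : Set ℤ)} := by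
  rw [NegComp, Set.sUnion_pair, negSet, Set.image_union, ← negSet, ← negSet, negSet_pair,
    negSet_pair, neg_neg, neg_neg, Set.union_comm]

lemma P2sym.not_negComp_singleton {n : ℕ} (hπ : P2sym n π) (hA : A ∈ π) : ¬NegComp {A} := by
  rw [NegComp, Set.sUnion_singleton]
  exact hπ.2.2.2 A hA

end Components

/-- Folding `x ↦ |x|` maps every pair of `π` to a pair of `π̂`. -/
def FoldsOntoHat (n : ℕ) (π : Set (Set ℤ)) : Prop :=
  ∀ b ∈ closers n π, Matches (closers n π) |partner π b| b

def negClosers (n : ℕ) (π : Set (Set ℤ)) : Finset ℤ :=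
  {b ∈ closers n π | partner π b < 0}

lemma mem_negClosers {n : ℕ} {π : Set (Set ℤ)} {b : ℤ} :
    b ∈ negClosers n π ↔ b ∈ closers n π ∧ partner π b < 0 :=
  mem_filter

namespace FoldsOntoHat

variable {n : ℕ} {π : Set (Set ℤ)} {X : Set ℤ} {b : ℤ}

lemma compOf_of_pos (hπ : P2sym n π) (hfold : FoldsOntoHat n π) (hb : b ∈ closers n π)
    (hpos : 0 < partner π b) (hX : X = {partner π b, b} ∨ X = {-partner π b, -b}) :
    compOf π (hatSet (closers n π)) X = {X} := by
  have hbpm := P2sym.mem_pmSet_of_mem_closers hb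
  have hXπ : X ∈ π := by
    rcases hX with rfl | rfl
    · exact hπ.pair_partner_mem hbpm
    · exact hπ.neg_pair_mem hbpm
  have hXhat : X ∈ hatSet (closers n π) := by
    have hm := hfold b hb
    rw [abs_of_pos hpos] at hm
    rcases hX with rfl | rfl
    · exact hatSet.pair_mem hm
    · exact Set.pair_comm (-b) _ ▸ hatSet.neg_pair_mem hm
  refine (compOf_subset_of_sUnion_eq hπ.1 (hatSet.isPartitionOn hπ.ballot_closers)
    (Set.singleton_subset_iff.2 hXπ) (Set.singleton_subset_iff.2 hXhat) rfl rfl).antisymm ?_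
  rintro _ rfl
  exact Relation.ReflTransGen.refl

lemma compOf_of_neg (hπ : P2sym n π) (hfold : FoldsOntoHat n π) (hb : b ∈ closers n π)
    (hneg : partner π b < 0) (hX : X = {partner π b, b} ∨ X = {-partner π b, -b}) :
    compOf π (hatSet (closers n π)) X = {{partner π b, b}, {-partner π b, -b}} := by
  have hbpm := P2sym.mem_pmSet_of_mem_closers hb
  have hm := hfold b hb
  rw [abs_of_neg hneg] at hm
  have hP : ({partner π b, b} : Set ℤ) ∈ π := hπ.pair_partner_mem hbpm
  have hnegP := hπ.neg_pair_mem hbpm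
  have hstep : connStep π (hatSet (closers n π)) {partner π b, b} {-partner π b, -b} :=
    ⟨hP, hnegP, _, hatSet.pair_mem hm, ⟨b, Or.inr rfl, Or.inr rfl⟩, ⟨_, Or.inl rfl, Or.inl rfl⟩⟩
  have hK : X ∈ ({{partner π b, b}, {-partner π b, -b}} : Set (Set ℤ)) := hX
  refine (compOf_subset_of_sUnion_eq hπ.1 (hatSet.isPartitionOn hπ.ballot_closers)
    (Set.pair_subset hP hnegP) (Set.pair_subset (hatSet.pair_mem hm) (hatSet.neg_pair_mem hm))
    ?_ hK).antisymm ?_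
  · ext x
    simp only [Set.sUnion_pair, Set.mem_union, Set.mem_insert_iff, Set.mem_singleton_iff, neg_neg]
    tauto
  · rintro Y (rfl | rfl) <;> rcases hX with rfl | rfl
    exacts [.refl, .single (connStep_symm hstep), .single hstep, .refl]

lemma allCyclesLengthOne (hπ : P2sym n π) (hfold : FoldsOntoHat n π) : AllCyclesLengthOne n π := by
  rintro K ⟨A, hA, rfl⟩
  rw [hπ.hatOf_eq]
  obtain ⟨b, hb, hAb⟩ := hπ.exists_closer_of_mem hA
  have hbpm := P2sym.mem_pmSet_of_mem_closers hb
  rcases lt_or_gt_of_ne (hπ.partner_ne_zero hbpm) with hneg | hpos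
  · rw [compOf_of_neg hπ hfold hb hneg hAb]
    have hP : ({partner π b, b} : Set ℤ) ∈ π := hπ.pair_partner_mem hbpm
    have hne := hπ.2.2.2 _ hP
    rw [negSet_pair] at hne
    exact ⟨fun _ => Set.ncard_pair hne.symm, fun h => absurd (negComp_pair_neg _ _) h⟩
  · rw [compOf_of_pos hπ hfold hb hpos hAb]
    exact ⟨fun h => absurd h (hπ.not_negComp_singleton hA), fun _ => Set.ncard_singleton _⟩

lemma negComps_eq (hπ : P2sym n π) (hfold : FoldsOntoHat n π) :
    {K ∈ CompsOf π (hatOf (2 * n) π) | NegComp K} =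
      (fun b => {{partner π b, b}, {-partner π b, -b}}) '' (negClosers n π : Set ℤ) := by
  rw [hπ.hatOf_eq]
  ext K
  simp only [negClosers, coe_filter, Set.mem_image, Set.mem_ofPred_eq]
  constructor
  · rintro ⟨⟨A, hA, rfl⟩, hK⟩
    obtain ⟨b, hb, hAb⟩ := hπ.exists_closer_of_mem hA
    rcases lt_or_gt_of_ne (hπ.partner_ne_zero (P2sym.mem_pmSet_of_mem_closers hb)) with
      hneg | hpos
    · exact ⟨b, ⟨hb, hneg⟩, (compOf_of_neg hπ hfold hb hneg hAb).symm⟩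
    · rw [compOf_of_pos hπ hfold hb hpos hAb] at hK
      exact absurd hK (hπ.not_negComp_singleton hA)
  · rintro ⟨b, ⟨hb, hneg⟩, rfl⟩
    have hbpm := P2sym.mem_pmSet_of_mem_closers hb
    refine ⟨⟨_, hπ.pair_partner_mem hbpm, ?_⟩, negComp_pair_neg _ _⟩
    exact (compOf_of_neg hπ hfold hb hneg (Or.inl rfl)).symm

lemma cNeg_eq (hπ : P2sym n π) (hfold : FoldsOntoHat n π) : cNeg n π = #(negClosers n π) := by
  rw [cNeg, negComps_eq hπ hfold, Set.InjOn.ncard_image, Set.ncard_coe_finset]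
  intro b hb b' hb' heq
  simp only [negClosers, coe_filter, Set.mem_ofPred_eq] at hb hb'
  have hb0 := P2sym.closers_pos hb.1
  have hb0' := P2sym.closers_pos hb'.1
  have hmem : b ∈ ⋃₀ {({partner π b', b'} : Set ℤ), {-partner π b', -b'}} := by
    simp only at heq
    rw [← heq]
    exact ⟨_, Or.inl rfl, Or.inr rfl⟩
  simp only [Set.sUnion_pair, Set.mem_union, Set.mem_insert_iff, Set.mem_singleton_iff] at hmem
  rcases hmem with (h | rfl) | (h | h)
  · omega
  · rfl
  · have := (hfold b' hb'.1).notMem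
    rw [abs_of_neg hb'.2, ← h] at this
    exact absurd hb.1 this
  · omega

end FoldsOntoHat

lemma AllCyclesLengthOne.eq_or_eq_negSet {n : ℕ} {π : Set (Set ℤ)} (hcyc : AllCyclesLengthOne n π)
    (hπ : P2sym n π) {P Q : Set ℤ} (hP : P ∈ π) (hQ : Q ∈ compOf π (hatOf (2 * n) π) P) :
    Q = P ∨ Q = negSet P := by
  set K := compOf π (hatOf (2 * n) π) P
  have hK := hcyc K ⟨P, hP, rfl⟩
  have hPK : P ∈ K := .refl
  by_cases hneg : NegComp K
  · obtain ⟨x, hx⟩ := (hπ.1.1 P hP).2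
    obtain ⟨Z, hZK, hxZ⟩ : -x ∈ ⋃₀ K := by
      rw [← hneg, mem_negSet, neg_neg]; exact ⟨P, hPK, hx⟩
    have hZ : Z = negSet P := hπ.1.eq_of_mem (compOf_subset hP hZK) (hπ.2.2.1 P hP) hxZ
      (by rwa [mem_negSet, neg_neg])
    have hcard := hK.1 hneg
    have hKeq := Set.eq_of_subset_of_ncard_le (Set.pair_subset hPK (hZ ▸ hZK))
      (by rw [hcard, Set.ncard_pair (hπ.2.2.2 P hP).symm]) (Set.finite_of_ncard_ne_zero (by omega))
    rw [← hKeq] at hQ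
    exact hQ
  · obtain ⟨X, hKX⟩ := Set.ncard_eq_one.1 (hK.2 hneg)
    rw [hKX] at hPK hQ
    exact Or.inl (hQ.trans hPK.symm)

/-- The pair of `π` at the opener matched with a closer `b` is connected, through their common
block of `π̂`, to the pair of `b`; in a cycle of length one it must be that pair or its
mirror image. -/
lemma P2sym.foldsOntoHat {n : ℕ} {π : Set (Set ℤ)} (hπ : P2sym n π)
    (hcyc : AllCyclesLengthOne n π) : FoldsOntoHat n π := by
  intro b hb
  obtain ⟨a, hm⟩ := hπ.ballot_closers.exists_matches_of_mem hb
  have hbpm := P2sym.mem_pmSet_of_mem_closers hb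
  have hapm : a ∈ pmSet (2 * n) := by
    have := mem_pmSet_two_mul.1 hbpm; have := hm.lt; have := hm.one_le
    rw [mem_pmSet_two_mul]; omega
  have hstep : connStep π (hatOf (2 * n) π) {partner π b, b} {a, partner π a} := by
    rw [hπ.hatOf_eq]
    exact ⟨hπ.pair_partner_mem hbpm, (hπ.partner_spec hapm).2, _, hatSet.pair_mem hm,
      ⟨b, Or.inr rfl, Or.inr rfl⟩, ⟨a, Or.inl rfl, Or.inl rfl⟩⟩
  have ha : a ∈ ({partner π b, b} : Set ℤ) ∨ a ∈ ({-partner π b, -b} : Set ℤ) := by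
    rw [← negSet_pair]
    rcases hcyc.eq_or_eq_negSet hπ (hπ.pair_partner_mem hbpm) (.single hstep) with h | h <;>
      rw [← h] <;> simp
  have habs : |partner π b| = a := by
    have := hm.lt; have := hm.one_le
    simp only [Set.mem_insert_iff, Set.mem_singleton_iff] at ha
    rcases ha with (h | h) | (h | h) <;> rw [abs_eq (by omega)] <;> omega
  rwa [habs]

/-! ### Reconstruction from the closers and the signs -/

open Classical in
def signFlip (R N : Finset ℤ) (x : ℤ) : ℤ :=
  if ∃ b ∈ N, Matches R |x| b then -x else x

/-- Inverse of `π ↦ (closers n π, negClosers n π)` on the partitions folding onto their hat: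
the pairs of `hatSet R`, with the opener of each closer in `N` moved across `0`. -/
def decode (R N : Finset ℤ) : Set (Set ℤ) :=
  (fun B => signFlip R N '' B) '' hatSet R

lemma IsPartitionOn.image_involutive {S : Set ℤ} {σ : Set (Set ℤ)} (h : IsPartitionOn S σ)
    {f : ℤ → ℤ} (hf : Function.Involutive f) (hS : ∀ x, f x ∈ S ↔ x ∈ S) :
    IsPartitionOn S ((fun B => f '' B) '' σ) := by
  refine ⟨?_, fun x hx => ?_⟩
  · rintro _ ⟨C, hC, rfl⟩
    obtain ⟨hsub, hne⟩ := h.1 C hC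
    exact ⟨Set.image_subset_iff.2 fun y hy => (hS y).2 (hsub hy), hne.image f⟩
  · obtain ⟨B, ⟨hB, hfxB⟩, huniq⟩ := h.2 (f x) ((hS x).2 hx)
    refine ⟨f '' B, ⟨⟨B, hB, rfl⟩, ⟨f x, hfxB, hf x⟩⟩, ?_⟩
    rintro _ ⟨⟨C, hC, rfl⟩, y, hyC, rfl⟩
    rw [huniq C ⟨hC, by rwa [hf y]⟩]

lemma negSet_image {f : ℤ → ℤ} (hodd : ∀ x, f (-x) = -f x) (B : Set ℤ) :
    negSet (f '' B) = f '' negSet B := by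
  rw [negSet, negSet, Set.image_image, Set.image_image]
  exact Set.image_congr fun x _ => (hodd x).symm

lemma hatSet.negSet_ne {R : Finset ℤ} {B : Set ℤ} (hB : B ∈ hatSet R) : negSet B ≠ B := by
  intro h
  obtain ⟨x, hx⟩ : B.Nonempty := by obtain ⟨a, b, -, rfl | rfl⟩ := hB <;> exact ⟨_, Or.inl rfl⟩
  have hnx : -x ∈ B := by rw [← h, mem_negSet, neg_neg]; exact hx
  rcases pos_or_neg hB with hs | hs <;> have := hs x hx <;> have := hs _ hnx <;> omega

namespace signFlip

variable {R N : Finset ℤ} {a b x : ℤ}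

lemma abs_eq (x : ℤ) : |signFlip R N x| = |x| := by
  unfold signFlip; split_ifs <;> simp

lemma neg (x : ℤ) : signFlip R N (-x) = -signFlip R N x := by
  unfold signFlip; rw [abs_neg]; split_ifs <;> rfl

lemma involutive : Function.Involutive (signFlip R N) := fun x => by
  unfold signFlip
  by_cases h : ∃ b ∈ N, Matches R |x| b
  · rw [if_pos h, abs_neg, if_pos h, neg_neg]
  · rw [if_neg h, if_neg h]

lemma mem_pmSet_iff {m : ℕ} : signFlip R N x ∈ pmSet m ↔ x ∈ pmSet m := by
  rw [pmSet, Set.mem_ofPred_eq, Set.mem_ofPred_eq, ← abs_ne_zero, abs_eq, abs_ne_zero]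

lemma of_mem (hb : b ∈ R) (hb0 : 0 < b) : signFlip R N b = b := by
  rw [signFlip, if_neg]
  rintro ⟨b', -, hm⟩
  rw [abs_of_pos hb0] at hm
  exact hm.notMem hb

lemma of_matches_of_mem (hm : Matches R a b) (hbN : b ∈ N) : signFlip R N a = -a := by
  rw [signFlip, if_pos]
  exact ⟨b, hbN, by rwa [abs_of_pos hm.pos_left]⟩

lemma of_matches_of_notMem (hm : Matches R a b) (hbN : b ∉ N) : signFlip R N a = a := by
  rw [signFlip, if_neg]
  rintro ⟨b', hb', hm'⟩
  rw [abs_of_pos hm.pos_left] at hm'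
  exact hbN (hm.right_unique hm' ▸ hb')

end signFlip

namespace decode

variable {n : ℕ} {R N : Finset ℤ}

lemma p2sym (hR : Ballot n R) : P2sym n (decode R N) := by
  refine ⟨(hatSet.isPartitionOn hR).image_involutive signFlip.involutive
      fun _ => signFlip.mem_pmSet_iff, ?_, ?_, ?_⟩ <;> rintro _ ⟨C, hC, rfl⟩
  · obtain ⟨a, b, hab, rfl⟩ := hatSet.isPairB hC
    dsimp only
    rw [Set.image_pair]
    exact ⟨_, _, signFlip.involutive.injective.ne hab, rfl⟩
  · rw [negSet_image signFlip.neg]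
    exact ⟨_, hatSet.negSet_mem hC, rfl⟩
  · rw [negSet_image signFlip.neg]
    exact fun h => hatSet.negSet_ne hC (signFlip.involutive.injective.image_injective h)

lemma partner_eq_signFlip (hR : Ballot n R) {a b : ℤ} (hm : Matches R a b) :
    partner (decode R N) b = signFlip R N a := by
  refine partner_eq (p2sym (N := N) hR).1 (fun h => ?_) ⟨_, hatSet.pair_mem hm, ?_⟩
  · have := congrArg abs h
    rw [signFlip.abs_eq, abs_of_pos hm.pos_left, abs_of_pos hm.pos_right] at this
    exact hm.lt.ne this
  · dsimp only
    rw [Set.image_pair, signFlip.of_mem hm.mem hm.pos_right, Set.pair_comm]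

lemma closers_eq (hR : Ballot n R) : closers n (decode R N) = R := by
  refine (eq_of_subset_of_card_le (fun b hb => ?_) ?_).symm
  · obtain ⟨a, hm⟩ := hR.exists_matches_of_mem hb
    rw [closers, mem_filter, partner_eq_signFlip hR hm, signFlip.abs_eq, abs_of_pos hm.pos_left]
    exact ⟨hR.subset hb, hm.lt⟩
  · rw [(p2sym hR).ballot_closers.card_eq, hR.card_eq]

lemma foldsOntoHat (hR : Ballot n R) : FoldsOntoHat n (decode R N) := by
  intro b hb
  rw [closers_eq hR] at hb ⊢
  obtain ⟨a, hm⟩ := hR.exists_matches_of_mem hb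
  rwa [partner_eq_signFlip hR hm, signFlip.abs_eq, abs_of_pos hm.pos_left]

lemma negClosers_eq (hR : Ballot n R) (hN : N ⊆ R) : negClosers n (decode R N) = N := by
  ext b
  rw [mem_negClosers, closers_eq hR]
  refine ⟨fun ⟨hbR, hneg⟩ => ?_, fun hbN => ⟨hN hbN, ?_⟩⟩
  · obtain ⟨a, hm⟩ := hR.exists_matches_of_mem hbR
    by_contra hbN
    rw [partner_eq_signFlip hR hm, signFlip.of_matches_of_notMem hm hbN] at hneg
    exact absurd hm.pos_left hneg.not_gt
  · obtain ⟨a, hm⟩ := hR.exists_matches_of_mem (hN hbN)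
    rw [partner_eq_signFlip hR hm, signFlip.of_matches_of_mem hm hbN, neg_neg_iff_pos]
    exact hm.pos_left

lemma cNeg_eq (hR : Ballot n R) (hN : N ⊆ R) : cNeg n (decode R N) = #N := by
  rw [FoldsOntoHat.cNeg_eq (p2sym hR) (foldsOntoHat hR), negClosers_eq hR hN]

end decode

lemma FoldsOntoHat.signFlip_abs_partner {n : ℕ} {π : Set (Set ℤ)} (hπ : P2sym n π)
    (hfold : FoldsOntoHat n π) {b : ℤ} (hb : b ∈ closers n π) :
    signFlip (closers n π) (negClosers n π) |partner π b| = partner π b := by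
  have hm := hfold b hb
  rcases lt_or_gt_of_ne (hπ.partner_ne_zero (P2sym.mem_pmSet_of_mem_closers hb)) with hneg | hpos
  · rw [signFlip.of_matches_of_mem hm (mem_negClosers.2 ⟨hb, hneg⟩), abs_of_neg hneg, neg_neg]
  · rw [signFlip.of_matches_of_notMem hm fun h => (mem_negClosers.1 h).2.not_gt hpos,
      abs_of_pos hpos]

lemma FoldsOntoHat.decode_eq {n : ℕ} {π : Set (Set ℤ)} (hπ : P2sym n π)
    (hfold : FoldsOntoHat n π) :
    decode (closers n π) (negClosers n π) = π := by
  have hflip : ∀ b ∈ closers n π, signFlip (closers n π) (negClosers n π) '' {|partner π b|, b} =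
      {partner π b, b} := fun b hb => by
    rw [Set.image_pair, signFlip.of_mem hb (P2sym.closers_pos hb),
      hfold.signFlip_abs_partner hπ hb]
  have hflip' : ∀ b ∈ closers n π,
      signFlip (closers n π) (negClosers n π) '' {-b, -|partner π b|} =
      {-partner π b, -b} := fun b hb => by
    rw [← negSet_pair, ← negSet_image signFlip.neg, Set.pair_comm, hflip b hb, negSet_pair]
  ext B
  constructor
  · rintro ⟨_, ⟨a, b, hm, rfl | rfl⟩, rfl⟩ <;> obtain rfl := hm.left_unique (hfold b hm.mem) <;>
      dsimp only
    · rw [hflip b hm.mem]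
      exact hπ.pair_partner_mem (P2sym.mem_pmSet_of_mem_closers hm.mem)
    · rw [hflip' b hm.mem]
      exact hπ.neg_pair_mem (P2sym.mem_pmSet_of_mem_closers hm.mem)
  · intro hB
    obtain ⟨b, hb, rfl | rfl⟩ := hπ.exists_closer_of_mem hB
    · exact ⟨_, hatSet.pair_mem (hfold b hb), hflip b hb⟩
    · exact ⟨_, hatSet.neg_pair_mem (hfold b hb), hflip' b hb⟩

/-! ### Counting -/

open Classical in
def ballotSets (n : ℕ) : Finset (Finset ℤ) :=
  {R ∈ (Icc 1 (2 * n : ℤ)).powerset | Ballot n R}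

open Classical in
lemma mem_ballotSets {n : ℕ} {R : Finset ℤ} : R ∈ ballotSets n ↔ Ballot n R := by
  rw [ballotSets, mem_filter, mem_powerset]
  exact ⟨And.right, fun h => ⟨h.subset, h⟩⟩

lemma mem_sigma_ballotSets {n : ℕ} {s : (_ : Finset ℤ) × Finset ℤ} :
    s ∈ ((ballotSets n).sigma powerset : Set ((_ : Finset ℤ) × Finset ℤ)) ↔
      Ballot n s.1 ∧ s.2 ⊆ s.1 := by
  rw [mem_coe, mem_sigma, mem_ballotSets, mem_powerset]

lemma bijOn_decode (n : ℕ) :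
    Set.BijOn (fun s : (_ : Finset ℤ) × Finset ℤ => decode s.1 s.2)
      ((ballotSets n).sigma powerset : Set ((_ : Finset ℤ) × Finset ℤ))
      {π | P2sym n π ∧ AllCyclesLengthOne n π} := by
  refine ⟨fun ⟨R, N⟩ hs => ?_, fun ⟨R, N⟩ hs ⟨R', N'⟩ ht h => ?_, fun π ⟨hπ, hcyc⟩ => ?_⟩
  · obtain ⟨hR, -⟩ := mem_sigma_ballotSets.1 hs
    exact ⟨decode.p2sym hR, (decode.foldsOntoHat hR).allCyclesLengthOne (decode.p2sym hR)⟩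
  · obtain ⟨hR, hN⟩ := mem_sigma_ballotSets.1 hs
    obtain ⟨hR', hN'⟩ := mem_sigma_ballotSets.1 ht
    dsimp only at hR hN hR' hN' h
    obtain rfl : R = R' := by rw [← decode.closers_eq (N := N) hR, h, decode.closers_eq hR']
    rw [← decode.negClosers_eq hR hN, h, decode.negClosers_eq hR' hN']
  · exact ⟨⟨closers n π, negClosers n π⟩,
      mem_sigma_ballotSets.2 ⟨hπ.ballot_closers, filter_subset _ _⟩,
      (hπ.foldsOntoHat hcyc).decode_eq hπ⟩

lemma finsum_pow_cNeg {M : Type*} [CommSemiring M] (n : ℕ) (q : M) :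
    ∑ᶠ π ∈ {π : Set (Set ℤ) | P2sym n π ∧ AllCyclesLengthOne n π}, q ^ cNeg n π =
      #(ballotSets n) * (1 + q) ^ n := by
  rw [← finsum_mem_eq_of_bijOn _ (bijOn_decode n) fun s hs => rfl, finsum_mem_coe_finset,
    sum_sigma, ← nsmul_eq_mul, ← sum_const]
  refine sum_congr rfl fun R hR => ?_
  have hR := mem_ballotSets.1 hR
  calc ∑ N ∈ R.powerset, q ^ cNeg n (decode R N)
      = ∑ N ∈ R.powerset, q ^ #N * 1 ^ (#R - #N) :=
        sum_congr rfl fun N hN => by rw [decode.cNeg_eq hR (mem_powerset.1 hN), one_pow, mul_one]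
    _ = (1 + q) ^ n := by rw [sum_pow_mul_eq_add_pow, hR.card_eq, add_comm]

section Dyck

open DyckStep

/-- Entry `i` of the list is step `i + 1` of the path. -/
def dyckList (n : ℕ) (R : Finset ℤ) : List DyckStep :=
  List.ofFn fun i : Fin (2 * n) => if (i : ℤ) + 1 ∈ R then D else U

variable {n : ℕ} {R : Finset ℤ}

lemma length_dyckList : (dyckList n R).length = 2 * n := List.length_ofFn

lemma count_U_add_count_D (l : List DyckStep) : l.count U + l.count D = l.length := by
  induction l with
  | nil => rfl
  | cons s l ih => cases s <;> simp <;> omega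

lemma count_D_take_dyckList (hR : R ⊆ Icc 1 (2 * n : ℤ)) {k : ℕ} (hk : k ≤ 2 * n) :
    ((dyckList n R).take k).count D = #{x ∈ R | x ≤ (k : ℤ)} := by
  induction k with
  | zero =>
    refine (card_eq_zero.2 (filter_eq_empty_iff.2 fun x hx => ?_)).symm
    have := Finset.mem_Icc.1 (hR hx); push_cast; omega
  | succ k ih =>
    rw [List.take_add_one, List.count_append, ih (by omega), Nat.cast_succ,
      card_filter_le_add_one]
    simp only [dyckList, List.getElem?_ofFn, show k < 2 * n by omega, dite_true]
    split_ifs <;> simp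

lemma count_take_dyckList (hR : R ⊆ Icc 1 (2 * n : ℤ)) {k : ℕ} (hk : k ≤ 2 * n) :
    ((dyckList n R).take k).count U + #{x ∈ R | x ≤ (k : ℤ)} = k := by
  rw [← count_D_take_dyckList hR hk, count_U_add_count_D, List.length_take, length_dyckList]
  omega

lemma ballot_iff (hR : R ⊆ Icc 1 (2 * n : ℤ)) : Ballot n R ↔
    (dyckList n R).count U = (dyckList n R).count D ∧
      ∀ i, ((dyckList n R).take i).count D ≤ ((dyckList n R).take i).count U := by
  have hall : {x ∈ R | x ≤ ((2 * n : ℕ) : ℤ)} = R :=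
    filter_true_of_mem fun x hx => by have := Finset.mem_Icc.1 (hR hx); push_cast; omega
  have hfull := count_take_dyckList hR le_rfl
  have hfullD := count_D_take_dyckList hR le_rfl
  rw [List.take_of_length_le length_dyckList.le, hall] at hfull hfullD
  constructor
  · intro hB
    have := hB.card_eq
    refine ⟨by rw [hfullD]; omega, fun i => ?_⟩
    rcases le_or_gt i (2 * n) with hi | hi
    · have := hB.height_nonneg i (by omega)
      rw [height] at this
      have := count_take_dyckList hR hi
      rw [count_D_take_dyckList hR hi]
      omega
    · rw [List.take_of_length_le (by rw [length_dyckList]; omega)]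
      omega
  · rintro ⟨hUD, hpre⟩
    have hcard : #R = n := by omega
    refine ⟨hR, hcard, fun k hk => ?_⟩
    rcases le_or_gt k (2 * n) with hk' | hk'
    · lift k to ℕ using hk
      have := hpre k
      have := count_take_dyckList hR (by omega : k ≤ 2 * n)
      rw [count_D_take_dyckList hR (by omega)] at *
      rw [height]
      omega
    · have : {x ∈ R | x ≤ k} = R :=
        filter_true_of_mem fun x hx => by have := Finset.mem_Icc.1 (hR hx); omega
      rw [height, this, hcard]
      omega

lemma dyckList_injOn {R' : Finset ℤ} (hR : R ⊆ Icc 1 (2 * n : ℤ)) (hR' : R' ⊆ Icc 1 (2 * n : ℤ))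
    (h : dyckList n R = dyckList n R') : R = R' := by
  have key : ∀ {R : Finset ℤ}, R ⊆ Icc 1 (2 * n : ℤ) → ∀ x,
      x ∈ R ↔ x ∈ Icc 1 (2 * n : ℤ) ∧ (dyckList n R)[(x - 1).toNat]? = some D := by
    intro R hR x
    unfold dyckList
    rw [List.getElem?_ofFn]
    by_cases hx : x ∈ Icc 1 (2 * n : ℤ)
    · have h1 : (x - 1).toNat < 2 * n := by rw [Finset.mem_Icc] at hx; omega
      have h2 : (((x - 1).toNat : ℕ) : ℤ) + 1 = x := by rw [Finset.mem_Icc] at hx; omega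
      simp only [h1, dite_true, h2, Option.some.injEq, hx, true_and]
      split_ifs with h <;> simp [h]
    · exact ⟨fun h => absurd (hR h) hx, fun h => absurd h.1 hx⟩
  ext x
  rw [key hR, key hR', h]

lemma exists_dyckList_eq (l : List DyckStep) (hl : l.length = 2 * n) :
    ∃ R ⊆ Icc 1 (2 * n : ℤ), dyckList n R = l := by
  classical
  refine ⟨{x ∈ Icc 1 (2 * n : ℤ) | l.getD (x - 1).toNat U = D}, filter_subset _ _, ?_⟩
  refine List.ext_getElem (by rw [length_dyckList, hl]) fun i h1 h2 => ?_
  simp only [dyckList, List.getElem_ofFn]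
  have hi : i < 2 * n := by rwa [length_dyckList] at h1
  have hmem : (i : ℤ) + 1 ∈ {x ∈ Icc 1 (2 * n : ℤ) | l.getD (x - 1).toNat U = D} ↔ l[i] = D := by
    rw [mem_filter, Finset.mem_Icc, add_sub_cancel_right, Int.toNat_natCast,
      List.getD_eq_getElem _ _ h2]
    exact ⟨And.right, fun h => ⟨by omega, h⟩⟩
  split_ifs with h
  · exact (hmem.1 h).symm
  · exact ((l[i]).dichotomy.resolve_right (mt hmem.2 h)).symm

lemma card_ballotSets (n : ℕ) : #(ballotSets n) = catalan n := by
  rw [← DyckWord.card_dyckWord_semilength_eq_catalan, Fintype.card]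
  have hdyck := fun {R} (hR : R ∈ ballotSets n) =>
    (ballot_iff (mem_ballotSets.1 hR).subset).1 (mem_ballotSets.1 hR)
  refine card_bij (fun R hR => ⟨⟨dyckList n R, (hdyck hR).1, (hdyck hR).2⟩, ?_⟩)
    (fun _ _ => mem_univ _) (fun R hR R' hR' h => ?_) (fun p _ => ?_)
  · rw [DyckWord.semilength]
    have := count_U_add_count_D (dyckList n R)
    rw [length_dyckList, (hdyck hR).1] at this
    simp only
    rw [(hdyck hR).1]; omega
  · exact dyckList_injOn (mem_ballotSets.1 hR).subset (mem_ballotSets.1 hR').subset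
      (congrArg (fun p : {p : DyckWord // p.semilength = n} => p.1.toList) h)
  · obtain ⟨R, hR, hRl⟩ := exists_dyckList_eq p.1.toList
      (by rw [← p.1.two_mul_semilength_eq_length, p.2])
    have hB : Ballot n R :=
      (ballot_iff hR).2 (hRl ▸ ⟨p.1.count_U_eq_count_D, p.1.count_D_le_count_U⟩)
    exact ⟨R, mem_ballotSets.2 hB, Subtype.ext (DyckWord.ext hRl)⟩

end Dyck

/-- Σ_{π ∈ P₂^{sym}(2n), all cycles of length 1} q₋^{c₋(π)}
= C_n · (1+q₋)ⁿ, where C_n is the n-th Catalan number. -/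
theorem catalan_specialization (n : ℕ) (qm : ℂ) :
    (∑ᶠ π ∈ {π : Set (Set ℤ) | P2sym n π ∧ AllCyclesLengthOne n π}, qm ^ cNeg n π)
      = (_root_.catalan n : ℂ) * (1 + qm) ^ n := by
  rw [finsum_pow_cNeg, card_ballotSets]

end TypeB
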